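/- arXiv:2110.07115 — 7 statements merged into one kernel-verified Lean document; each statement's English description precedes it below -/
import Mathlib

section
/- The mixing map μ_N is a permutation of [N²]² and satisfies: for every fixed a, b ∈ [N²], the number of pairs (k,ν) with k ∈ {1,2}, ν ∈ [N²], and a ∈ {π_k(μ_N(ν,b)), π_k(μ_N(b,ν))} is at most 4N. -/
/-- The mixing map `μ_N` in closed form: for `i = (α₁-1)N+β₁`, `j = (α₂-1)N+β₂`,
`μ_N(i,j) = ((α₁-1)N+α₂, (β₁-1)N+β₂)`. -/
def Mu (N : ℕ) : ℕ × ℕ → ℕ × ℕ :=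
  fun p => (((p.1 - 1) / N) * N + (p.2 - 1) / N + 1, ((p.1 - 1) % N) * N + (p.2 - 1) % N + 1)

/-- Coordinate projections `π₁, π₂` of `[N²]²`, indexed by `k ∈ {1,2}`. -/
def proj (a : ℕ) (p : ℕ × ℕ) : ℕ := if a = 1 then p.1 else p.2

private lemma mu_eval {N d₁ m₁ d₂ m₂ : ℕ} (hN : 0 < N) (h1 : m₁ < N) (h2 : m₂ < N) :
    Mu N (d₁ * N + m₁ + 1, d₂ * N + m₂ + 1) = (d₁ * N + d₂ + 1, m₁ * N + m₂ + 1) := by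
  simp only [Mu, Nat.add_sub_cancel, Prod.mk.injEq]
  constructor
  · rw [mul_comm d₁ N, mul_comm d₂ N, Nat.mul_add_div hN, Nat.mul_add_div hN,
      Nat.div_eq_of_lt h1, Nat.div_eq_of_lt h2]
    ring
  · rw [mul_comm d₁ N, mul_comm d₂ N, Nat.mul_add_mod, Nat.mul_add_mod,
      Nat.mod_eq_of_lt h1, Nat.mod_eq_of_lt h2]

private lemma decomp {N ν : ℕ} (hN : 0 < N) (h1 : 1 ≤ ν) (h2 : ν ≤ N ^ 2) :
    ∃ d m, d < N ∧ m < N ∧ ν = d * N + m + 1 := by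
  refine ⟨(ν - 1) / N, (ν - 1) % N, ?_, Nat.mod_lt _ hN, ?_⟩
  · apply Nat.div_lt_of_lt_mul
    rw [pow_two] at h2; omega
  · have := Nat.div_add_mod' (ν - 1) N
    omega

private lemma mem_bound {N d₁ d₂ : ℕ} (h1 : d₁ < N) (h2 : d₂ < N) :
    1 ≤ d₁ * N + d₂ + 1 ∧ d₁ * N + d₂ + 1 ≤ N ^ 2 := by
  refine ⟨by omega, ?_⟩
  rw [pow_two]
  calc d₁ * N + d₂ + 1 ≤ d₁ * N + N := by omega
    _ = (d₁ + 1) * N := by ring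
    _ ≤ N * N := Nat.mul_le_mul_right N h1

private lemma cardA (N a : ℕ) (hN : 0 < N) (P : ℕ → Prop) [DecidablePred P]
    (h : ∀ ν₁ ν₂, P ν₁ → P ν₂ → (ν₁ - 1) / N = (ν₂ - 1) / N) :
    ((Finset.Icc 1 (N ^ 2)).filter P).card ≤ N := by
  have := Finset.card_le_card_of_injOn (f := fun ν => (ν - 1) % N)
    (s := (Finset.Icc 1 (N ^ 2)).filter P) (t := Finset.range N)
    (fun ν hν => Finset.mem_range.2 (Nat.mod_lt _ hN))
    (fun ν₁ h₁ ν₂ h₂ he => by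
      simp only [Finset.coe_filter, Finset.mem_Icc, Set.mem_setOf_eq] at h₁ h₂
      have hd := h ν₁ ν₂ h₁.2 h₂.2
      have e1 := Nat.div_add_mod (ν₁ - 1) N
      have e2 := Nat.div_add_mod (ν₂ - 1) N
      simp only at he
      rw [hd, he] at e1
      omega)
  simpa using this

private lemma cardB (N a : ℕ) (hN : 0 < N) (P : ℕ → Prop) [DecidablePred P]
    (h : ∀ ν₁ ν₂, P ν₁ → P ν₂ → (ν₁ - 1) % N = (ν₂ - 1) % N) :
    ((Finset.Icc 1 (N ^ 2)).filter P).card ≤ N := by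
  have := Finset.card_le_card_of_injOn (f := fun ν => (ν - 1) / N)
    (s := (Finset.Icc 1 (N ^ 2)).filter P) (t := Finset.range N)
    (fun ν hν => by
      simp only [Finset.mem_coe, Finset.mem_filter, Finset.mem_Icc] at hν
      refine Finset.mem_range.2 (Nat.div_lt_of_lt_mul ?_)
      have := hν.1
      rw [pow_two] at this; omega)
    (fun ν₁ h₁ ν₂ h₂ he => by
      simp only [Finset.coe_filter, Finset.mem_Icc, Set.mem_setOf_eq] at h₁ h₂
      have hd := h ν₁ ν₂ h₁.2 h₂.2
      have e1 := Nat.div_add_mod (ν₁ - 1) N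
      have e2 := Nat.div_add_mod (ν₂ - 1) N
      rw [show (ν₁ - 1) / N = (ν₂ - 1) / N from he, hd] at e1
      omega)
  simpa using this

/-- The mixing map `μ_N` is a permutation of `[N²]²` and for every fixed `a, b ∈ [N²]`
the number of pairs `(k,ν)` with `k ∈ {1,2}`, `ν ∈ [N²]` and
`a ∈ {π_k(μ_N(ν,b)), π_k(μ_N(b,ν))}` is at most `4N`. -/
theorem stmt_5 (N : ℕ) (hN : 0 < N) :
    Set.BijOn (Mu N)
      ((Set.Icc 1 (N ^ 2)) ×ˢ (Set.Icc 1 (N ^ 2)))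
      ((Set.Icc 1 (N ^ 2)) ×ˢ (Set.Icc 1 (N ^ 2)))
    ∧ ∀ a b : ℕ, a ∈ Finset.Icc 1 (N ^ 2) → b ∈ Finset.Icc 1 (N ^ 2) →
        ((({1, 2} : Finset ℕ) ×ˢ Finset.Icc 1 (N ^ 2)).filter
            (fun x => a = proj x.1 (Mu N (x.2, b)) ∨ a = proj x.1 (Mu N (b, x.2)))).card
          ≤ 4 * N := by
  classical
  have hmaps : Set.MapsTo (Mu N)
      ((Set.Icc 1 (N ^ 2)) ×ˢ (Set.Icc 1 (N ^ 2)))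
      ((Set.Icc 1 (N ^ 2)) ×ˢ (Set.Icc 1 (N ^ 2))) := by
    rintro ⟨i, j⟩ ⟨⟨hi1, hi2⟩, hj1, hj2⟩
    obtain ⟨d₁, m₁, hd₁, hm₁, rfl⟩ := decomp hN hi1 hi2
    obtain ⟨d₂, m₂, hd₂, hm₂, rfl⟩ := decomp hN hj1 hj2
    rw [mu_eval hN hm₁ hm₂]
    exact ⟨mem_bound hd₁ hd₂, mem_bound hm₁ hm₂⟩
  have hinv : ∀ x ∈ (Set.Icc 1 (N ^ 2)) ×ˢ (Set.Icc 1 (N ^ 2)),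
      Mu N (Mu N x) = x := by
    rintro ⟨i, j⟩ ⟨⟨hi1, hi2⟩, hj1, hj2⟩
    obtain ⟨d₁, m₁, hd₁, hm₁, rfl⟩ := decomp hN hi1 hi2
    obtain ⟨d₂, m₂, hd₂, hm₂, rfl⟩ := decomp hN hj1 hj2
    rw [mu_eval hN hm₁ hm₂, mu_eval hN hd₂ hm₂]
  refine ⟨Set.InvOn.bijOn ⟨hinv, hinv⟩ hmaps hmaps, ?_⟩
  intro a b ha hb
  simp only [Finset.mem_Icc] at ha hb
  set I := Finset.Icc 1 (N ^ 2) with hI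
  set F1 := I.filter (fun ν => a = (Mu N (ν, b)).1 ∨ a = (Mu N (b, ν)).1) with hF1
  set F2 := I.filter (fun ν => a = (Mu N (ν, b)).2 ∨ a = (Mu N (b, ν)).2) with hF2
  have hsub : (({1, 2} : Finset ℕ) ×ˢ I).filter
      (fun x => a = proj x.1 (Mu N (x.2, b)) ∨ a = proj x.1 (Mu N (b, x.2)))
      ⊆ ({1} : Finset ℕ) ×ˢ F1 ∪ ({2} : Finset ℕ) ×ˢ F2 := by
    rintro ⟨k, ν⟩ hx
    simp only [Finset.mem_filter, Finset.mem_product, Finset.mem_insert,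
      Finset.mem_singleton, Finset.mem_union, hF1, hF2] at hx ⊢
    rcases hx.1.1 with rfl | rfl
    · exact Or.inl ⟨rfl, hx.1.2, by simpa [proj] using hx.2⟩
    · exact Or.inr ⟨rfl, hx.1.2, by simpa [proj] using hx.2⟩
  refine le_trans (Finset.card_le_card hsub) ?_
  refine le_trans (Finset.card_union_le _ _) ?_
  rw [Finset.card_product, Finset.card_product, Finset.card_singleton,
    Finset.card_singleton, one_mul, one_mul]
  have hF1card : F1.card ≤ 2 * N := by
    rw [hF1, Finset.filter_or]
    refine le_trans (Finset.card_union_le _ _) ?_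
    have c1 : (I.filter (fun ν => a = (Mu N (ν, b)).1)).card ≤ N := by
      apply cardA N a hN
      intro ν₁ ν₂ p₁ p₂
      simp only [Mu] at p₁ p₂
      have : (ν₁ - 1) / N * N = (ν₂ - 1) / N * N := by omega
      exact Nat.eq_of_mul_eq_mul_right hN this
    have c2 : (I.filter (fun ν => a = (Mu N (b, ν)).1)).card ≤ N := by
      apply cardA N a hN
      intro ν₁ ν₂ p₁ p₂
      simp only [Mu] at p₁ p₂
      omega
    omega
  have hF2card : F2.card ≤ 2 * N := by
    rw [hF2, Finset.filter_or]
    refine le_trans (Finset.card_union_le _ _) ?_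
    have c1 : (I.filter (fun ν => a = (Mu N (ν, b)).2)).card ≤ N := by
      apply cardB N a hN
      intro ν₁ ν₂ p₁ p₂
      simp only [Mu] at p₁ p₂
      have : (ν₁ - 1) % N * N = (ν₂ - 1) % N * N := by omega
      exact Nat.eq_of_mul_eq_mul_right hN this
    have c2 : (I.filter (fun ν => a = (Mu N (b, ν)).2)).card ≤ N := by
      apply cardB N a hN
      intro ν₁ ν₂ p₁ p₂
      simp only [Mu] at p₁ p₂
      omega
    omega
  omega
end

section
/- Suppose b_N · d_N = N² and consider the partial transpose Γ_{b_N,d_N} on [N²]². Then the number of triples (i₁,i₂,i₃) ∈ [N²]³ with μ_N(i₁,i₂) = Γ_{b_N,d_N}(i₁,i₃) is at most N³·(1 + N/d_N). -/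
/-- The `(b,d)`-partial transpose in closed form. -/
def Gamma (d : ℕ) : ℕ × ℕ → ℕ × ℕ :=
  fun p => (((p.1 - 1) / d) * d + (p.2 - 1) % d + 1, ((p.2 - 1) / d) * d + (p.1 - 1) % d + 1)

lemma ceil_low (m d : ℕ) (hd : 0 < d) : m ≤ ((m + (d-1))/d) * d := by
  have h : ((m + (d-1))/d) * d + (m + (d-1)) % d = m + (d-1) := by
    rw [mul_comm]; exact Nat.div_add_mod _ _
  have h2 : (m + (d-1)) % d < d := Nat.mod_lt _ hd
  omega

lemma ceil_le (m q d : ℕ) (hd : 0 < d) (h : m ≤ q * d) : (m + (d-1))/d ≤ q := by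
  have h2 : (q*d + (d-1))/d = q := by
    rw [add_comm, Nat.add_mul_div_right _ _ hd, Nat.div_eq_of_lt (by omega), Nat.zero_add]
  calc (m + (d-1))/d ≤ (q*d + (d-1))/d := Nat.div_le_div_right (by omega)
    _ = q := h2

lemma Kd_ge (N d : ℕ) (hd : 0 < d) : N ≤ ((N-1)/d + 1) * d := by
  have h : ((N-1)/d) * d + (N-1) % d = N - 1 := by rw [mul_comm]; exact Nat.div_add_mod _ _
  have h2 : (N-1) % d < d := Nat.mod_lt _ hd
  have h3 : ((N-1)/d + 1) * d = ((N-1)/d)*d + d := by ring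
  omega

lemma sub_cancel {a b c : ℕ} (ha : c ≤ a) (hb : c ≤ b) (h : a - c = b - c) : a = b := by omega

lemma key_abs (N d a A β B qw rw q r : ℕ) (hN : 0 < N) (hd : 0 < d)
    (hB : B < d) (hqw : qw < N) (hrw : rw < N) (hr : r < d)
    (E1 : a + qw = A + r) (E2 : β + rw = q*d + B) :
    (a - A ≤ r) ∧ (r - (a - A) < N) ∧ (r - (a - A) < d) ∧
    ((β - B + (d-1))/d ≤ q) ∧ (q < (β - B + (d-1))/d + ((N-1)/d + 1)) ∧
    (qw = A + r - a) ∧ (rw = q*d + B - β) := by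
  have g1 : (β - B) ≤ (((β - B) + (d-1))/d) * d := ceil_low _ _ hd
  have g4 : N ≤ ((N-1)/d + 1) * d := Kd_ge N d hd
  have C4 : ((β - B) + (d-1))/d ≤ q := ceil_le _ _ _ hd (by omega)
  have C5 : q < (β - B + (d-1))/d + ((N-1)/d + 1) := by
    have hmul : q * d < ((β - B + (d-1))/d + ((N-1)/d + 1)) * d := by
      rw [add_mul]; omega
    exact lt_of_mul_lt_mul_right hmul (Nat.zero_le d)
  exact ⟨by omega, by omega, by omega, C4, C5, by omega, by omega⟩

lemma key (N d : ℕ) (hN : 0 < N) (hd : 0 < d) (i1 i2 i3 : ℕ)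
    (h2 : 1 ≤ i2) (h2' : i2 ≤ N^2) (h3 : 1 ≤ i3)
    (hcond : Mu N (i1, i2) = Gamma d (i1, i3)) :
    (((i1-1)/N)*N - ((i1-1)/d)*d) ≤ (i3-1) % d ∧
    (i3-1) % d - (((i1-1)/N)*N - ((i1-1)/d)*d) < N ∧
    (i3-1) % d - (((i1-1)/N)*N - ((i1-1)/d)*d) < d ∧
    ((((i1-1)%N)*N - (i1-1)%d) + (d-1))/d ≤ (i3-1)/d ∧
    (i3-1)/d < ((((i1-1)%N)*N - (i1-1)%d) + (d-1))/d + ((N-1)/d + 1) ∧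
    i3 = ((i3-1)/d)*d + (i3-1)%d + 1 ∧
    i2 = (((i1-1)/d)*d + (i3-1)%d - ((i1-1)/N)*N)*N
         + (((i3-1)/d)*d + (i1-1)%d - ((i1-1)%N)*N) + 1 := by
  simp only [Mu, Gamma, Prod.mk.injEq] at hcond
  obtain ⟨E1, E2⟩ := hcond
  have f1 : ((i2-1)/N)*N + (i2-1)%N = i2 - 1 := by rw [mul_comm]; exact Nat.div_add_mod _ _
  have f2 : (i2-1)%N < N := Nat.mod_lt _ hN
  have f3 : (i2-1)/N < N := by
    have hNN : N^2 = N*N := sq N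
    have : i2 - 1 < N * N := by omega
    exact Nat.div_lt_iff_lt_mul hN |>.mpr this
  have f4 : ((i3-1)/d)*d + (i3-1)%d = i3 - 1 := by rw [mul_comm]; exact Nat.div_add_mod _ _
  have f5 : (i3-1)%d < d := Nat.mod_lt _ hd
  have fB : (i1-1)%d < d := Nat.mod_lt _ hd
  obtain ⟨C1, C2, C3, C4, C5, Cqw, Crw⟩ :=
    key_abs N d (((i1-1)/N)*N) (((i1-1)/d)*d) (((i1-1)%N)*N) ((i1-1)%d)
      ((i2-1)/N) ((i2-1)%N) ((i3-1)/d) ((i3-1)%d) hN hd fB f3 f2 f5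
      (by omega) (by omega)
  refine ⟨C1, C2, C3, C4, C5, by omega, ?_⟩
  rw [← Cqw, ← Crw]
  omega

/-- If `b·d = N²`, the number of triples `(i₁,i₂,i₃) ∈ [N²]³` with
`μ_N(i₁,i₂) = Γ_{b,d}(i₁,i₃)` is at most `N³·(1 + N/d)`. -/
theorem stmt_7 (N b d : ℕ) (hN : 0 < N) (hb : 0 < b) (hd : 0 < d) (hbd : b * d = N ^ 2) :
    ((((Finset.Icc 1 (N ^ 2)) ×ˢ (Finset.Icc 1 (N ^ 2)) ×ˢ (Finset.Icc 1 (N ^ 2))).filter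
          (fun t => Mu N (t.1, t.2.1) = Gamma d (t.1, t.2.2))).card : ℝ)
      ≤ (N : ℝ) ^ 3 * (1 + (N : ℝ) / d) := by
  classical
  set K : ℕ := (N-1)/d + 1 with hK
  set f : ℕ × ℕ × ℕ → ℕ × ℕ × ℕ := fun t =>
    (t.1, ((t.2.2 - 1) % d - (((t.1 - 1)/N)*N - ((t.1-1)/d)*d),
           (t.2.2 - 1)/d - ((((t.1-1)%N)*N - (t.1-1)%d) + (d-1))/d)) with hf
  set T : Finset (ℕ × ℕ × ℕ) :=
    (Finset.Icc 1 (N^2)) ×ˢ (Finset.range (min N d) ×ˢ Finset.range K) with hT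
  have hcard : (((Finset.Icc 1 (N ^ 2)) ×ˢ (Finset.Icc 1 (N ^ 2)) ×ˢ (Finset.Icc 1 (N ^ 2))).filter
          (fun t => Mu N (t.1, t.2.1) = Gamma d (t.1, t.2.2))).card ≤ N^2 * (min N d * K) := by
    have hmaps : ∀ t ∈ (((Finset.Icc 1 (N ^ 2)) ×ˢ (Finset.Icc 1 (N ^ 2)) ×ˢ (Finset.Icc 1 (N ^ 2))).filter
          (fun t => Mu N (t.1, t.2.1) = Gamma d (t.1, t.2.2))), f t ∈ T := by
      rintro ⟨i1, i2, i3⟩ ht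
      simp only [Finset.mem_filter, Finset.mem_product, Finset.mem_Icc] at ht
      obtain ⟨⟨⟨h11, h12⟩, ⟨h21, h22⟩, h31, h32⟩, hcond⟩ := ht
      obtain ⟨C1, C2, C3, C4, C5, C6, C7⟩ := key N d hN hd i1 i2 i3 h21 h22 h31 hcond
      simp only [hf, hT, Finset.mem_product, Finset.mem_Icc, Finset.mem_range]
      refine ⟨⟨h11, h12⟩, ?_, ?_⟩
      · exact lt_min C2 C3
      · omega
    have hinj : Set.InjOn f (((Finset.Icc 1 (N ^ 2)) ×ˢ (Finset.Icc 1 (N ^ 2)) ×ˢ (Finset.Icc 1 (N ^ 2))).filter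
          (fun t => Mu N (t.1, t.2.1) = Gamma d (t.1, t.2.2))) := by
      rintro ⟨i1, i2, i3⟩ ht ⟨j1, j2, j3⟩ ht' heq
      simp only [Finset.mem_coe, Finset.mem_filter, Finset.mem_product, Finset.mem_Icc] at ht ht'
      obtain ⟨⟨⟨h11, h12⟩, ⟨h21, h22⟩, h31, h32⟩, hcond⟩ := ht
      obtain ⟨⟨⟨g11, g12⟩, ⟨g21, g22⟩, g31, g32⟩, gcond⟩ := ht'
      obtain ⟨C1, C2, C3, C4, C5, C6, C7⟩ := key N d hN hd i1 i2 i3 h21 h22 h31 hcond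
      obtain ⟨D1, D2, D3, D4, D5, D6, D7⟩ := key N d hN hd j1 j2 j3 g21 g22 g31 gcond
      simp only [hf, Prod.mk.injEq] at heq
      obtain ⟨e1, e2, e3⟩ := heq
      subst e1
      have hr : (i3-1) % d = (j3-1) % d := sub_cancel C1 D1 e2
      have hq : (i3-1) / d = (j3-1) / d := sub_cancel C4 D4 e3
      have h3eq : i3 = j3 := by rw [C6, D6, hr, hq]
      refine Prod.ext rfl (Prod.ext ?_ h3eq)
      simp only
      rw [C7, D7, hr, hq]
    calc _ ≤ T.card := Finset.card_le_card_of_injOn f hmaps hinj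
      _ = N^2 * (min N d * K) := by simp [hT, Nat.card_Icc]
  calc ((((Finset.Icc 1 (N ^ 2)) ×ˢ (Finset.Icc 1 (N ^ 2)) ×ˢ (Finset.Icc 1 (N ^ 2))).filter
          (fun t => Mu N (t.1, t.2.1) = Gamma d (t.1, t.2.2))).card : ℝ)
      ≤ ((N^2 * (min N d * K) : ℕ) : ℝ) := Nat.cast_le.mpr hcard
    _ ≤ (N : ℝ) ^ 3 * (1 + (N : ℝ) / d) := by
      rcases le_or_gt d N with hdn | hdn
      · -- d ≤ N : min = d, d*K ≤ 2N
        have hmin : min N d = d := min_eq_right hdn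
        have hdk : d * K ≤ 2 * N := by
          have h1 : ((N-1)/d) * d ≤ N - 1 := Nat.div_mul_le_self _ _
          have h2 : d * K = ((N-1)/d) * d + d := by rw [hK]; ring
          omega
        have hnat : N^2 * (min N d * K) ≤ 2 * N^3 := by
          rw [hmin]
          calc N^2 * (d * K) ≤ N^2 * (2*N) := Nat.mul_le_mul_left _ hdk
            _ = 2 * N^3 := by ring
        calc ((N^2 * (min N d * K) : ℕ) : ℝ) ≤ ((2 * N^3 : ℕ) : ℝ) := Nat.cast_le.mpr hnat
          _ = 2 * (N:ℝ)^3 := by push_cast; ring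
          _ ≤ (N : ℝ) ^ 3 * (1 + (N : ℝ) / d) := by
            have hd' : (0:ℝ) < d := by positivity
            have : (1:ℝ) ≤ (N:ℝ)/d := by
              rw [le_div_iff₀ hd']
              exact_mod_cast by simpa using hdn
            nlinarith [pow_pos (show (0:ℝ) < N by positivity) 3]
      · -- N < d : min = N, K = 1
        have hmin : min N d = N := min_eq_left hdn.le
        have hK1 : K = 1 := by
          rw [hK, Nat.div_eq_of_lt (by omega)]
        have hnat : N^2 * (min N d * K) = N^3 := by rw [hmin, hK1]; ring
        rw [hnat]
        have : ((N^3 : ℕ) : ℝ) = (N:ℝ)^3 := by push_cast; ring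
        rw [this]
        nlinarith [pow_pos (show (0:ℝ) < N by positivity) 3,
          div_nonneg (show (0:ℝ) ≤ N by positivity) (show (0:ℝ) ≤ d by positivity)]
end

section
/- Let p, q ∈ P₂^ε(m) with ε : [m] → {1,*}. If S ⊆ [m] is a union of some of the sets S_t and k ∈ [r] is such that all elements of S_k have the same ε-value, then p and q pair no element of S_k with another element of S_k; consequently the set D(S:S_k) = {t ∈ S_k : ∃ a,b ∈ S with p(a) = q(b) = t} contains the set B(S:S_k) of blocks of p∨q contained in S∪S_k but not in S, counted via |D(S:S_k)| ≥ |B(S:S_k)|. -/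
/-- One step of the relation generated by the two pairings `p` and `q`. -/
def stepRel (p q : ℕ → ℕ) : ℕ → ℕ → Prop := fun x y => p x = y ∨ q x = y

/-- The block of `p ∨ q` containing `s`: everything reachable from `s` by applying `p` and
`q` (these being involutions, this is the orbit of the group they generate). -/
def blockOf (p q : ℕ → ℕ) (s : ℕ) : Set ℕ := {t | Relation.ReflTransGen (stepRel p q) s t}

/-- Partial sums `m(t) = n₁ + … + n_t`. -/
def mfun (n : ℕ → ℕ) (t : ℕ) : ℕ := ∑ u ∈ Finset.Icc 1 t, n u

/-- The block of indices `S_t = {m(t-1)+1, …, m(t)}`. -/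
def Sblock (n : ℕ → ℕ) (t : ℕ) : Finset ℕ := Finset.Icc (mfun n (t - 1) + 1) (mfun n t)

lemma reach_aux (M : ℕ) (p q : ℕ → ℕ)
    (hp : ∀ s ∈ Finset.Icc 1 M, p s ∈ Finset.Icc 1 M ∧ p (p s) = s)
    (hq : ∀ s ∈ Finset.Icc 1 M, q s ∈ Finset.Icc 1 M ∧ q (q s) = s)
    (s : ℕ) (hs : s ∈ Finset.Icc 1 M) (t : ℕ)
    (h : Relation.ReflTransGen (stepRel p q) s t) :
    t ∈ Finset.Icc 1 M ∧ Relation.ReflTransGen (stepRel p q) t s := by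
  induction h with
  | refl => exact ⟨hs, Relation.ReflTransGen.refl⟩
  | tail hab hbc ih =>
    rename_i b c
    rcases hbc with hpb | hqb
    · refine ⟨hpb ▸ (hp b ih.1).1, Relation.ReflTransGen.head (Or.inl ?_) ih.2⟩
      rw [← hpb]; exact (hp b ih.1).2
    · refine ⟨hqb ▸ (hq b ih.1).1, Relation.ReflTransGen.head (Or.inr ?_) ih.2⟩
      rw [← hqb]; exact (hq b ih.1).2

lemma block_eq_aux (M : ℕ) (p q : ℕ → ℕ)
    (hp : ∀ s ∈ Finset.Icc 1 M, p s ∈ Finset.Icc 1 M ∧ p (p s) = s)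
    (hq : ∀ s ∈ Finset.Icc 1 M, q s ∈ Finset.Icc 1 M ∧ q (q s) = s)
    (s : ℕ) (hs : s ∈ Finset.Icc 1 M) (t : ℕ) (ht : t ∈ blockOf p q s) :
    blockOf p q t = blockOf p q s := by
  have h := reach_aux M p q hp hq s hs t ht
  ext u
  exact ⟨fun hu => Relation.ReflTransGen.trans ht hu,
    fun hu => Relation.ReflTransGen.trans h.2 hu⟩

/-- Setup as in the paper: `m = n₁+…+n_r`, `S_t = {m(t-1)+1,…,m(t)}`, `ε` constant equal
to `θ_t` on `S_t`, and `p, q ∈ P₂^ε(m)` (fixed-point-free involutions of `[m]` pairing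
indices with different `ε`-values).  If `S` is a union of some of the sets `S_t` and
`k ∈ [r]` (so that all elements of `S_k` have the same `ε`-value), then `p` and `q` pair
no element of `S_k` with another element of `S_k`, and
`|B(S:S_k)| ≤ |D(S:S_k)|`, where `D(S:S_k) = {t ∈ S_k : ∃ a,b ∈ S, p(a) = q(b) = t}` and
`B(S:S_k)` is the set of blocks of `p∨q` contained in `S ∪ S_k` but not in `S`. -/
theorem stmt_10 (r : ℕ) (hr : 0 < r) (n : ℕ → ℕ) (hn : ∀ t ∈ Finset.Icc 1 r, 0 < n t)
    (θ : ℕ → Bool) (ε : ℕ → Bool)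
    (hε : ∀ t ∈ Finset.Icc 1 r, ∀ s ∈ Sblock n t, ε s = θ t)
    (p q : ℕ → ℕ)
    (hp : ∀ s ∈ Finset.Icc 1 (mfun n r),
      p s ∈ Finset.Icc 1 (mfun n r) ∧ p (p s) = s ∧ p s ≠ s ∧ ε (p s) ≠ ε s)
    (hq : ∀ s ∈ Finset.Icc 1 (mfun n r),
      q s ∈ Finset.Icc 1 (mfun n r) ∧ q (q s) = s ∧ q s ≠ s ∧ ε (q s) ≠ ε s)
    (T : Finset ℕ) (hT : T ⊆ Finset.Icc 1 r) (S : Finset ℕ) (hS : S = T.biUnion (Sblock n))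
    (k : ℕ) (hk : k ∈ Finset.Icc 1 r) :
    (∀ a ∈ Sblock n k, p a ∉ Sblock n k ∧ q a ∉ Sblock n k)
    ∧ Set.ncard {B : Set ℕ | (∃ s ∈ Finset.Icc 1 (mfun n r), B = blockOf p q s) ∧
          B ⊆ (↑S ∪ ↑(Sblock n k) : Set ℕ) ∧ ¬ B ⊆ (↑S : Set ℕ)}
        ≤ (Finset.filter
            (fun t => ∃ a ∈ S, ∃ b ∈ S, p a = t ∧ q b = t) (Sblock n k)).card := by
  set M := mfun n r with hM
  have hp' : ∀ s ∈ Finset.Icc 1 M, p s ∈ Finset.Icc 1 M ∧ p (p s) = s :=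
    fun s hs => ⟨(hp s hs).1, (hp s hs).2.1⟩
  have hq' : ∀ s ∈ Finset.Icc 1 M, q s ∈ Finset.Icc 1 M ∧ q (q s) = s :=
    fun s hs => ⟨(hq s hs).1, (hq s hs).2.1⟩
  -- Sblock n k ⊆ Icc 1 M
  have hkr : k ≤ r := (Finset.mem_Icc.mp hk).2
  have hmono : mfun n k ≤ M := by
    apply Finset.sum_le_sum_of_subset
    exact Finset.Icc_subset_Icc_right hkr
  have hSkM : ∀ a ∈ Sblock n k, a ∈ Finset.Icc 1 M := by
    intro a ha
    rw [Sblock, Finset.mem_Icc] at ha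
    exact Finset.mem_Icc.mpr ⟨le_trans (Nat.le_add_left 1 _) ha.1, le_trans ha.2 hmono⟩
  -- part 1
  have part1 : ∀ a ∈ Sblock n k, p a ∉ Sblock n k ∧ q a ∉ Sblock n k := by
    intro a ha
    have haM := hSkM a ha
    constructor
    · intro hpa
      exact (hp a haM).2.2.2 (by rw [hε k hk a ha, hε k hk (p a) hpa])
    · intro hqa
      exact (hq a haM).2.2.2 (by rw [hε k hk a ha, hε k hk (q a) hqa])
  refine ⟨part1, ?_⟩
  set 𝔅 : Set (Set ℕ) := {B : Set ℕ | (∃ s ∈ Finset.Icc 1 M, B = blockOf p q s) ∧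
          B ⊆ (↑S ∪ ↑(Sblock n k) : Set ℕ) ∧ ¬ B ⊆ (↑S : Set ℕ)} with h𝔅
  set D := Finset.filter (fun t => ∃ a ∈ S, ∃ b ∈ S, p a = t ∧ q b = t) (Sblock n k) with hD
  classical
  set f : Set ℕ → ℕ := fun B =>
    if h : ∃ t, t ∈ B ∧ t ∈ Sblock n k ∧ t ∉ S then h.choose else 0 with hf
  have hchoice : ∀ B ∈ 𝔅, f B ∈ B ∧ f B ∈ Sblock n k ∧ f B ∉ S := by
    intro B hB
    obtain ⟨_, hsub, hnsub⟩ := hB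
    have hex : ∃ t, t ∈ B ∧ t ∈ Sblock n k ∧ t ∉ S := by
      rw [Set.not_subset] at hnsub
      obtain ⟨t, htB, htS⟩ := hnsub
      rcases hsub htB with h | h
      · exact absurd h htS
      · exact ⟨t, htB, by exact_mod_cast h, htS⟩
    rw [hf]; simp only [dif_pos hex]
    exact hex.choose_spec
  have hmaps : ∀ B ∈ 𝔅, f B ∈ (↑D : Set ℕ) := by
    intro B hB
    obtain ⟨htB, htSk, htS⟩ := hchoice B hB
    set t := f B
    have htM := hSkM t htSk
    obtain ⟨⟨s, hsM, hBs⟩, hsub, _⟩ := hB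
    have hpt : p t ∈ B := by
      rw [hBs] at htB ⊢
      exact Relation.ReflTransGen.tail htB (Or.inl rfl)
    have hqt : q t ∈ B := by
      rw [hBs] at htB ⊢
      exact Relation.ReflTransGen.tail htB (Or.inr rfl)
    have hptS : p t ∈ S := by
      rcases hsub hpt with h | h
      · exact_mod_cast h
      · exact absurd (by exact_mod_cast h) (part1 t htSk).1
    have hqtS : q t ∈ S := by
      rcases hsub hqt with h | h
      · exact_mod_cast h
      · exact absurd (by exact_mod_cast h) (part1 t htSk).2
    simp only [hD, Finset.coe_filter, Set.mem_setOf_eq]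
    exact ⟨htSk, p t, hptS, q t, hqtS, (hp t htM).2.1, (hq t htM).2.1⟩
  have key : ∀ B ∈ 𝔅, blockOf p q (f B) = B := by
    intro B hB
    have ht := (hchoice B hB).1
    obtain ⟨s, hsM, hBs⟩ := hB.1
    subst hBs
    exact block_eq_aux M p q hp' hq' s hsM _ ht
  have hinj : Set.InjOn f 𝔅 := by
    intro B₁ hB₁ B₂ hB₂ heq
    rw [← key B₁ hB₁, ← key B₂ hB₂, heq]
  calc 𝔅.ncard ≤ (↑D : Set ℕ).ncard :=
        Set.ncard_le_ncard_of_injOn f hmaps hinj D.finite_toSet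
    _ = D.card := Set.ncard_coe_finset D
end

section
/- Let p₁ be a pair partition of a set of size m' and p₂ a pair partition of a set of size m'', and let n ≥ 1. Form the pair partitions p = p₁ ⋄ p₂ and q = q₁ ⋄ q₂ of [m] (m = 2n + m' + m'') which pair ν with m(x)+2-ν for ν ∈ S₁ ∪ S_x (a 'rainbow' of n pairs connecting the first block S₁ = [n] and the block S_x of size n), act as p₁, q₁ (shifted) on the middle segment of size m', and as p₂, q₂ (shifted) on the final segment of size m''. Then the number of blocks satisfies |(p₁⋄p₂) ∨ (q₁⋄q₂)| = |p₁ ∨ q₁| + |p₂ ∨ q₂| + n. -/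
/-- The number of blocks `|p ∨ q|` of the join of the pair partitions `p, q` of `[m]`. -/
noncomputable def numBlocks (p q : ℕ → ℕ) (m : ℕ) : ℕ :=
  Set.ncard {B : Set ℕ | ∃ s ∈ Finset.Icc 1 m, B = blockOf p q s}

/-- `p₁ ⋄ p₂` on `[m]`, `m = 2n + m' + m''`: a rainbow of `n` pairs joining
`S₁ = {1,…,n}` and `S_x = {n+m'+1,…,2n+m'}` (pairing `1 ↔ n+m'+1` and
`ν ↔ 2n+m'+2-ν` for `2 ≤ ν ≤ n`), the shift of `p₁` on the middle segment
`{n+1,…,n+m'}`, and the shift of `p₂` on the final segment `{2n+m'+1,…,m}`. -/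
def diamond (n m' : ℕ) (p₁ p₂ : ℕ → ℕ) : ℕ → ℕ := fun ν =>
  if ν = 1 then n + m' + 1
  else if ν = n + m' + 1 then 1
  else if (2 ≤ ν ∧ ν ≤ n) ∨ (n + m' + 2 ≤ ν ∧ ν ≤ 2 * n + m') then 2 * n + m' + 2 - ν
  else if n + 1 ≤ ν ∧ ν ≤ n + m' then n + p₁ (ν - n)
  else if 2 * n + m' + 1 ≤ ν then 2 * n + m' + p₂ (ν - (2 * n + m'))
  else 0

namespace Stmt11Aux

/-- The rainbow involution. -/
def rr (n m' : ℕ) : ℕ → ℕ := fun ν =>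
  if ν = 1 then n + m' + 1 else if ν = n + m' + 1 then 1 else 2 * n + m' + 2 - ν

lemma diamond_A {n m' : ℕ} (hn : 0 < n) (f g : ℕ → ℕ) {ν : ℕ}
    (hν : (1 ≤ ν ∧ ν ≤ n) ∨ (n + m' + 1 ≤ ν ∧ ν ≤ 2 * n + m')) :
    diamond n m' f g ν = rr n m' ν := by
  unfold diamond rr
  split_ifs <;> first | rfl | omega | (exfalso; omega)

lemma rr_lower {n m' : ℕ} (hn : 0 < n) {ν : ℕ} (h : 1 ≤ ν ∧ ν ≤ n) :
    n + m' + 1 ≤ rr n m' ν ∧ rr n m' ν ≤ 2 * n + m' := by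
  unfold rr; split_ifs <;> omega

lemma rr_upper {n m' : ℕ} (hn : 0 < n) {ν : ℕ} (h : n + m' + 1 ≤ ν ∧ ν ≤ 2 * n + m') :
    1 ≤ rr n m' ν ∧ rr n m' ν ≤ n := by
  unfold rr; split_ifs <;> omega

lemma rr_memA {n m' : ℕ} (hn : 0 < n) {ν : ℕ}
    (hν : (1 ≤ ν ∧ ν ≤ n) ∨ (n + m' + 1 ≤ ν ∧ ν ≤ 2 * n + m')) :
    (1 ≤ rr n m' ν ∧ rr n m' ν ≤ n) ∨
      (n + m' + 1 ≤ rr n m' ν ∧ rr n m' ν ≤ 2 * n + m') := by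
  unfold rr; split_ifs <;> omega

lemma rr_invol {n m' : ℕ} (hn : 0 < n) {ν : ℕ}
    (hν : (1 ≤ ν ∧ ν ≤ n) ∨ (n + m' + 1 ≤ ν ∧ ν ≤ 2 * n + m')) :
    rr n m' (rr n m' ν) = ν := by
  unfold rr; split_ifs <;> omega

lemma diamond_mid {n m' : ℕ} (hn : 0 < n) (f g : ℕ → ℕ) {ν : ℕ}
    (h1 : n + 1 ≤ ν) (h2 : ν ≤ n + m') :
    diamond n m' f g ν = n + f (ν - n) := by
  unfold diamond
  split_ifs <;> first | rfl | (exfalso; omega)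

lemma diamond_last {n m' : ℕ} (hn : 0 < n) (f g : ℕ → ℕ) {ν : ℕ}
    (h1 : 2 * n + m' + 1 ≤ ν) :
    diamond n m' f g ν = 2 * n + m' + g (ν - (2 * n + m')) := by
  unfold diamond
  split_ifs <;> first | rfl | (exfalso; omega)

/-- Forward transfer: reachability for the shifted pairings descends. -/
lemma reach_fwd {P Q f g : ℕ → ℕ} {k M : ℕ}
    (hP : ∀ ν, k + 1 ≤ ν → ν ≤ k + M → P ν = k + f (ν - k))
    (hQ : ∀ ν, k + 1 ≤ ν → ν ≤ k + M → Q ν = k + g (ν - k))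
    (hf : ∀ s, 1 ≤ s → s ≤ M → 1 ≤ f s ∧ f s ≤ M)
    (hg : ∀ s, 1 ≤ s → s ≤ M → 1 ≤ g s ∧ g s ≤ M)
    {s t : ℕ} (hs : k + 1 ≤ s ∧ s ≤ k + M)
    (h : Relation.ReflTransGen (stepRel P Q) s t) :
    (k + 1 ≤ t ∧ t ≤ k + M) ∧ Relation.ReflTransGen (stepRel f g) (s - k) (t - k) := by
  induction h with
  | refl => exact ⟨hs, .refl⟩
  | @tail b c _ hst ih =>
    obtain ⟨⟨h1, h2⟩, hr⟩ := ih
    rcases hst with h | h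
    · rw [hP _ h1 h2] at h
      have hfb := hf (b - k) (by omega) (by omega)
      exact ⟨⟨by omega, by omega⟩, hr.tail (Or.inl (by omega))⟩
    · rw [hQ _ h1 h2] at h
      have hgb := hg (b - k) (by omega) (by omega)
      exact ⟨⟨by omega, by omega⟩, hr.tail (Or.inr (by omega))⟩

/-- Backward transfer: reachability for the base pairings lifts. -/
lemma reach_bwd {P Q f g : ℕ → ℕ} {k M : ℕ}
    (hP : ∀ ν, k + 1 ≤ ν → ν ≤ k + M → P ν = k + f (ν - k))
    (hQ : ∀ ν, k + 1 ≤ ν → ν ≤ k + M → Q ν = k + g (ν - k))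
    (hf : ∀ s, 1 ≤ s → s ≤ M → 1 ≤ f s ∧ f s ≤ M)
    (hg : ∀ s, 1 ≤ s → s ≤ M → 1 ≤ g s ∧ g s ≤ M)
    {a b : ℕ} (ha : 1 ≤ a ∧ a ≤ M)
    (h : Relation.ReflTransGen (stepRel f g) a b) :
    (1 ≤ b ∧ b ≤ M) ∧ Relation.ReflTransGen (stepRel P Q) (a + k) (b + k) := by
  induction h with
  | refl => exact ⟨ha, .refl⟩
  | @tail b c _ hst ih =>
    obtain ⟨⟨h1, h2⟩, hr⟩ := ih
    rcases hst with h | h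
    · have hfb := hf b h1 h2
      refine ⟨⟨by omega, by omega⟩, hr.tail (Or.inl ?_)⟩
      rw [hP (b + k) (by omega) (by omega), Nat.add_sub_cancel]
      omega
    · have hgb := hg b h1 h2
      refine ⟨⟨by omega, by omega⟩, hr.tail (Or.inr ?_)⟩
      rw [hQ (b + k) (by omega) (by omega), Nat.add_sub_cancel]
      omega

lemma blockOf_shift {P Q f g : ℕ → ℕ} {k M : ℕ}
    (hP : ∀ ν, k + 1 ≤ ν → ν ≤ k + M → P ν = k + f (ν - k))
    (hQ : ∀ ν, k + 1 ≤ ν → ν ≤ k + M → Q ν = k + g (ν - k))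
    (hf : ∀ s, 1 ≤ s → s ≤ M → 1 ≤ f s ∧ f s ≤ M)
    (hg : ∀ s, 1 ≤ s → s ≤ M → 1 ≤ g s ∧ g s ≤ M)
    {s : ℕ} (hs : k + 1 ≤ s ∧ s ≤ k + M) :
    blockOf P Q s = (· + k) '' blockOf f g (s - k) := by
  ext t
  constructor
  · intro ht
    obtain ⟨⟨h1, h2⟩, hr⟩ := reach_fwd hP hQ hf hg hs ht
    exact ⟨t - k, hr, by show t - k + k = t; omega⟩
  · rintro ⟨b, hb, rfl⟩
    have h := (reach_bwd hP hQ hf hg (a := s - k) ⟨by omega, by omega⟩ hb).2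
    rwa [Nat.sub_add_cancel (by omega)] at h

lemma blockOf_rainbow {n m' : ℕ} (hn : 0 < n) (f g f' g' : ℕ → ℕ) {ν : ℕ}
    (hν : (1 ≤ ν ∧ ν ≤ n) ∨ (n + m' + 1 ≤ ν ∧ ν ≤ 2 * n + m')) :
    blockOf (diamond n m' f g) (diamond n m' f' g') ν = {ν, rr n m' ν} := by
  have hν' := rr_memA hn hν
  ext t
  simp only [blockOf, Set.mem_setOf_eq, Set.mem_insert_iff, Set.mem_singleton_iff]
  constructor
  · intro h
    induction h with
    | refl => left; rfl
    | @tail b c _ hst ih =>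
      rcases ih with rfl | rfl
      · rcases hst with h | h <;>
        · rw [diamond_A hn _ _ hν] at h
          right; exact h.symm
      · rcases hst with h | h <;>
        · rw [diamond_A hn _ _ hν'] at h
          left; rw [rr_invol hn hν] at h; exact h.symm
  · rintro (rfl | rfl)
    · exact .refl
    · exact .single (Or.inl (diamond_A hn _ _ hν))

end Stmt11Aux

open Stmt11Aux in
/-- For pair partitions `p₁, q₁` of `[m']`, `p₂, q₂` of `[m'']` and `n ≥ 1`,
`|(p₁⋄p₂) ∨ (q₁⋄q₂)| = |p₁ ∨ q₁| + |p₂ ∨ q₂| + n`. -/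
theorem stmt_11 (n m' m'' : ℕ) (hn : 0 < n)
    (p₁ q₁ p₂ q₂ : ℕ → ℕ)
    (hp₁ : ∀ s ∈ Finset.Icc 1 m', p₁ s ∈ Finset.Icc 1 m' ∧ p₁ (p₁ s) = s ∧ p₁ s ≠ s)
    (hq₁ : ∀ s ∈ Finset.Icc 1 m', q₁ s ∈ Finset.Icc 1 m' ∧ q₁ (q₁ s) = s ∧ q₁ s ≠ s)
    (hp₂ : ∀ s ∈ Finset.Icc 1 m'', p₂ s ∈ Finset.Icc 1 m'' ∧ p₂ (p₂ s) = s ∧ p₂ s ≠ s)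
    (hq₂ : ∀ s ∈ Finset.Icc 1 m'', q₂ s ∈ Finset.Icc 1 m'' ∧ q₂ (q₂ s) = s ∧ q₂ s ≠ s) :
    numBlocks (diamond n m' p₁ p₂) (diamond n m' q₁ q₂) (2 * n + m' + m'')
      = numBlocks p₁ q₁ m' + numBlocks p₂ q₂ m'' + n := by
  classical
  -- simplified range hypotheses
  have hp₁' : ∀ s, 1 ≤ s → s ≤ m' → 1 ≤ p₁ s ∧ p₁ s ≤ m' := by
    intro s h1 h2
    have := (hp₁ s (Finset.mem_Icc.mpr ⟨h1, h2⟩)).1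
    exact Finset.mem_Icc.mp this
  have hq₁' : ∀ s, 1 ≤ s → s ≤ m' → 1 ≤ q₁ s ∧ q₁ s ≤ m' := by
    intro s h1 h2
    exact Finset.mem_Icc.mp (hq₁ s (Finset.mem_Icc.mpr ⟨h1, h2⟩)).1
  have hp₂' : ∀ s, 1 ≤ s → s ≤ m'' → 1 ≤ p₂ s ∧ p₂ s ≤ m'' := by
    intro s h1 h2
    exact Finset.mem_Icc.mp (hp₂ s (Finset.mem_Icc.mpr ⟨h1, h2⟩)).1
  have hq₂' : ∀ s, 1 ≤ s → s ≤ m'' → 1 ≤ q₂ s ∧ q₂ s ≤ m'' := by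
    intro s h1 h2
    exact Finset.mem_Icc.mp (hq₂ s (Finset.mem_Icc.mpr ⟨h1, h2⟩)).1
  have hPmid : ∀ ν, n + 1 ≤ ν → ν ≤ n + m' →
      diamond n m' p₁ p₂ ν = n + p₁ (ν - n) := fun ν h1 h2 => diamond_mid hn _ _ h1 h2
  have hQmid : ∀ ν, n + 1 ≤ ν → ν ≤ n + m' →
      diamond n m' q₁ q₂ ν = n + q₁ (ν - n) := fun ν h1 h2 => diamond_mid hn _ _ h1 h2
  have hPlast : ∀ ν, 2 * n + m' + 1 ≤ ν → ν ≤ 2 * n + m' + m'' →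
      diamond n m' p₁ p₂ ν = 2 * n + m' + p₂ (ν - (2 * n + m')) :=
    fun ν h1 _ => diamond_last hn _ _ h1
  have hQlast : ∀ ν, 2 * n + m' + 1 ≤ ν → ν ≤ 2 * n + m' + m'' →
      diamond n m' q₁ q₂ ν = 2 * n + m' + q₂ (ν - (2 * n + m')) :=
    fun ν h1 _ => diamond_last hn _ _ h1
  set P := diamond n m' p₁ p₂ with hPdef
  set Q := diamond n m' q₁ q₂ with hQdef
  -- the three families of blocks
  set TA : Set (Set ℕ) := (fun ν => blockOf P Q ν) '' Set.Icc 1 n with hTAdef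
  set TB : Set (Set ℕ) := (fun ν => blockOf P Q ν) '' Set.Icc (n + 1) (n + m') with hTBdef
  set TC : Set (Set ℕ) :=
    (fun ν => blockOf P Q ν) '' Set.Icc (2 * n + m' + 1) (2 * n + m' + m'') with hTCdef
  have hrain : ∀ {ν : ℕ}, (1 ≤ ν ∧ ν ≤ n) ∨ (n + m' + 1 ≤ ν ∧ ν ≤ 2 * n + m') →
      blockOf P Q ν = {ν, rr n m' ν} := fun hν => blockOf_rainbow hn p₁ p₂ q₁ q₂ hν
  have hshiftB : ∀ {s : ℕ}, n + 1 ≤ s → s ≤ n + m' →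
      blockOf P Q s = (· + n) '' blockOf p₁ q₁ (s - n) := fun h1 h2 =>
    blockOf_shift hPmid hQmid hp₁' hq₁' ⟨h1, h2⟩
  have hshiftC : ∀ {s : ℕ}, 2 * n + m' + 1 ≤ s → s ≤ 2 * n + m' + m'' →
      blockOf P Q s = (· + (2 * n + m')) '' blockOf p₂ q₂ (s - (2 * n + m')) := fun h1 h2 =>
    blockOf_shift hPlast hQlast hp₂' hq₂' ⟨h1, h2⟩
  -- block subset facts
  have hsubB : ∀ {s t : ℕ}, n + 1 ≤ s → s ≤ n + m' → t ∈ blockOf P Q s →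
      n + 1 ≤ t ∧ t ≤ n + m' := fun h1 h2 ht =>
    (reach_fwd hPmid hQmid hp₁' hq₁' ⟨h1, h2⟩ ht).1
  have hsubC : ∀ {s t : ℕ}, 2 * n + m' + 1 ≤ s → s ≤ 2 * n + m' + m'' → t ∈ blockOf P Q s →
      2 * n + m' + 1 ≤ t ∧ t ≤ 2 * n + m' + m'' := fun h1 h2 ht =>
    (reach_fwd hPlast hQlast hp₂' hq₂' ⟨h1, h2⟩ ht).1
  -- decomposition of the set of blocks
  have hS : {B : Set ℕ | ∃ s ∈ Finset.Icc 1 (2 * n + m' + m''), B = blockOf P Q s}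
      = TA ∪ TB ∪ TC := by
    ext B
    simp only [Set.mem_setOf_eq, Set.mem_union, hTAdef, hTBdef, hTCdef, Set.mem_image,
      Set.mem_Icc, Finset.mem_Icc]
    constructor
    · rintro ⟨s, ⟨hs1, hs2⟩, rfl⟩
      by_cases h1 : s ≤ n
      · exact Or.inl (Or.inl ⟨s, ⟨hs1, h1⟩, rfl⟩)
      by_cases h2 : s ≤ n + m'
      · exact Or.inl (Or.inr ⟨s, ⟨by omega, h2⟩, rfl⟩)
      by_cases h3 : s ≤ 2 * n + m'
      · refine Or.inl (Or.inl ⟨rr n m' s, rr_upper hn ⟨by omega, h3⟩, ?_⟩)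
        show blockOf P Q (rr n m' s) = blockOf P Q s
        rw [hrain (rr_memA hn (Or.inr ⟨by omega, h3⟩)),
          hrain (Or.inr ⟨by omega, h3⟩), rr_invol hn (Or.inr ⟨by omega, h3⟩)]
        exact Set.pair_comm _ _
      · exact Or.inr ⟨s, ⟨by omega, by omega⟩, rfl⟩
    · rintro ((⟨s, ⟨h1, h2⟩, rfl⟩ | ⟨s, ⟨h1, h2⟩, rfl⟩) | ⟨s, ⟨h1, h2⟩, rfl⟩) <;>
        exact ⟨s, ⟨by omega, by omega⟩, rfl⟩
  -- cardinalities
  have hcardA : TA.ncard = n := by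
    rw [hTAdef, Set.ncard_image_of_injOn, ← Finset.coe_Icc, Set.ncard_coe_finset,
      Nat.card_Icc]
    · omega
    · intro a ha b hb hab
      simp only [Set.mem_Icc] at ha hb
      simp only at hab
      rw [hrain (Or.inl ha), hrain (Or.inl hb)] at hab
      have hmem : a ∈ ({b, rr n m' b} : Set ℕ) := hab ▸ Set.mem_insert a _
      have hrb := rr_lower (m' := m') hn hb
      rcases hmem with h | h
      · exact h
      · simp only [Set.mem_singleton_iff] at h; omega
  have hinj1 : Function.Injective (fun x : ℕ => x + n) := fun a b h => by simpa using h
  have hinj2 : Function.Injective (fun x : ℕ => x + (2 * n + m')) := fun a b h => by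
    simpa using h
  have hcardB : TB.ncard = numBlocks p₁ q₁ m' := by
    have hTB : TB = (Set.image (· + n)) ''
        {B : Set ℕ | ∃ s ∈ Finset.Icc 1 m', B = blockOf p₁ q₁ s} := by
      ext B
      simp only [hTBdef, Set.mem_image, Set.mem_Icc, Set.mem_setOf_eq, Finset.mem_Icc]
      constructor
      · rintro ⟨s, ⟨h1, h2⟩, rfl⟩
        exact ⟨blockOf p₁ q₁ (s - n), ⟨s - n, ⟨by omega, by omega⟩, rfl⟩,
          (hshiftB h1 h2).symm⟩
      · rintro ⟨_, ⟨a, ⟨ha1, ha2⟩, rfl⟩, rfl⟩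
        refine ⟨a + n, ⟨by omega, by omega⟩, ?_⟩
        rw [hshiftB (by omega) (by omega), Nat.add_sub_cancel]
    rw [hTB, Set.ncard_image_of_injective _ (Set.image_injective.mpr hinj1)]
    rfl
  have hcardC : TC.ncard = numBlocks p₂ q₂ m'' := by
    have hTC : TC = (Set.image (· + (2 * n + m'))) ''
        {B : Set ℕ | ∃ s ∈ Finset.Icc 1 m'', B = blockOf p₂ q₂ s} := by
      ext B
      simp only [hTCdef, Set.mem_image, Set.mem_Icc, Set.mem_setOf_eq, Finset.mem_Icc]
      constructor
      · rintro ⟨s, ⟨h1, h2⟩, rfl⟩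
        exact ⟨blockOf p₂ q₂ (s - (2 * n + m')), ⟨s - (2 * n + m'), ⟨by omega, by omega⟩, rfl⟩,
          (hshiftC h1 h2).symm⟩
      · rintro ⟨_, ⟨a, ⟨ha1, ha2⟩, rfl⟩, rfl⟩
        refine ⟨a + (2 * n + m'), ⟨by omega, by omega⟩, ?_⟩
        rw [hshiftC (by omega) (by omega), Nat.add_sub_cancel]
    rw [hTC, Set.ncard_image_of_injective _ (Set.image_injective.mpr hinj2)]
    rfl
  -- finiteness
  have hfinA : TA.Finite := (Set.finite_Icc 1 n).image _
  have hfinB : TB.Finite := (Set.finite_Icc (n + 1) (n + m')).image _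
  have hfinC : TC.Finite := (Set.finite_Icc (2 * n + m' + 1) (2 * n + m' + m'')).image _
  -- disjointness
  have hdAB : Disjoint TA TB := by
    rw [Set.disjoint_left]
    rintro B ⟨ν, hν, rfl⟩ ⟨s, hs, hBs⟩
    simp only [Set.mem_Icc] at hν hs
    have hmem : ν ∈ blockOf P Q s := by
      have h : blockOf P Q s = blockOf P Q ν := hBs
      rw [h]; exact Relation.ReflTransGen.refl
    have := hsubB hs.1 hs.2 hmem
    omega
  have hdAC : Disjoint TA TC := by
    rw [Set.disjoint_left]
    rintro B ⟨ν, hν, rfl⟩ ⟨s, hs, hBs⟩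
    simp only [Set.mem_Icc] at hν hs
    have hmem : ν ∈ blockOf P Q s := by
      have h : blockOf P Q s = blockOf P Q ν := hBs
      rw [h]; exact Relation.ReflTransGen.refl
    have := hsubC hs.1 hs.2 hmem
    omega
  have hdBC : Disjoint TB TC := by
    rw [Set.disjoint_left]
    rintro B ⟨ν, hν, rfl⟩ ⟨s, hs, hBs⟩
    simp only [Set.mem_Icc] at hν hs
    have hmem : ν ∈ blockOf P Q s := by
      have h : blockOf P Q s = blockOf P Q ν := hBs
      rw [h]; exact Relation.ReflTransGen.refl
    have := hsubC hs.1 hs.2 hmem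
    omega
  -- assemble
  show Set.ncard {B : Set ℕ | ∃ s ∈ Finset.Icc 1 (2 * n + m' + m''), B = blockOf P Q s} = _
  rw [hS, Set.ncard_union_eq (Set.disjoint_union_left.mpr ⟨hdAC, hdBC⟩)
      (hfinA.union hfinB) hfinC,
    Set.ncard_union_eq hdAB hfinA hfinB, hcardA, hcardB, hcardC]
  omega
end

section
/- If b·d = b'·d' = M and Γ_{b,d}, Γ_{b',d'} are the corresponding partial transposes on [M]², then for all i, j, k ∈ [M], the relation Γ_{b,d}(i,j) ∈ {Γ_{b',d'}(i,k), Γ_{b',d'}(k,j)} holds if and only if Γ_{b,d}(i,j) = Γ_{b',d'}(i,j). -/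
lemma Gamma_sum (d x y : ℕ) : x / d * d + y % d + 1 + (y / d * d + x % d + 1) = x + y + 2 := by
  have h1 := Nat.mod_add_div' x d
  have h2 := Nat.mod_add_div' y d
  have h3 : x / d * d + y % d + 1 + (y / d * d + x % d + 1)
      = (x % d + x / d * d) + (y % d + y / d * d) + 2 := by ring
  rw [h3, h1, h2]

/-- If `b·d = b'·d' = M`, then for `i, j ∈ [M]`, there exists `k ∈ [M]` with
`Γ_{b,d}(i,j) ∈ {Γ_{b',d'}(i,k), Γ_{b',d'}(k,j)}` iff `Γ_{b,d}(i,j) = Γ_{b',d'}(i,j)`. -/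
theorem stmt_13 (M b d b' d' : ℕ) (hb : 0 < b) (hd : 0 < d) (hb' : 0 < b') (hd' : 0 < d')
    (h1 : b * d = M) (h2 : b' * d' = M)
    (i j : ℕ) (hi : i ∈ Set.Icc 1 M) (hj : j ∈ Set.Icc 1 M) :
    (∃ k ∈ Set.Icc 1 M,
        Gamma d (i, j) = Gamma d' (i, k) ∨ Gamma d (i, j) = Gamma d' (k, j))
      ↔ Gamma d (i, j) = Gamma d' (i, j) := by
  obtain ⟨hi1, -⟩ := hi
  obtain ⟨hj1, hj2⟩ := hj
  constructor
  · rintro ⟨k, ⟨hk1, -⟩, h | h⟩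
    · have hs := congrArg (fun p : ℕ × ℕ => p.1 + p.2) h
      simp only [Gamma] at hs
      rw [Gamma_sum d (i - 1) (j - 1), Gamma_sum d' (i - 1) (k - 1)] at hs
      have : j = k := by omega
      rw [← this] at h; exact h
    · have hs := congrArg (fun p : ℕ × ℕ => p.1 + p.2) h
      simp only [Gamma] at hs
      rw [Gamma_sum d (i - 1) (j - 1), Gamma_sum d' (k - 1) (j - 1)] at hs
      have : i = k := by omega
      rw [← this] at h; exact h
  · intro h
    exact ⟨j, ⟨hj1, hj2⟩, Or.inl h⟩
end

section
/- Let N be a positive integer and b, d positive integers with bd = N². Then the set {(i₁,i₂,i₃) ∈ [N²]³ : μ_N(i₁,i₂) = Γ_{b,d}(i₃,i₂)} has cardinality o(N⁴) as N → ∞ along any sequence with both b = b_N → ∞ and d = d_N → ∞; more precisely its cardinality is at most N³·(1 + N/d) + N³·(1 + N/b). -/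
open Filter

/-- The number of triples `(i₁,i₂,i₃) ∈ [N²]³` with `μ_N(i₁,i₂) = Γ_{b,d}(i₃,i₂)`. -/
def mixCount (dN N : ℕ) : ℕ :=
  (((Finset.Icc 1 (N ^ 2)) ×ˢ (Finset.Icc 1 (N ^ 2)) ×ˢ (Finset.Icc 1 (N ^ 2))).filter
      (fun t => Mu N (t.1, t.2.1) = Gamma dN (t.2.2, t.2.1))).card

lemma count_c (N d f K : ℕ) (hN : 0 < N) (hd : 0 < d) :
    ((Finset.range N).filter (fun c => (c * N + f) / d = K)).card ≤ (d - 1) / N + 1 := by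
  set s := (Finset.range N).filter (fun c => (c * N + f) / d = K) with hs
  rcases s.eq_empty_or_nonempty with h | h
  · simp [h]
  · have hc0 := s.min'_mem h
    set c0 := s.min' h with hc0def
    have hsub : s ⊆ Finset.Icc c0 (c0 + (d - 1) / N) := by
      intro c hc
      have h1 : c0 ≤ c := Finset.min'_le s c hc
      have hcK : (c * N + f) / d = K := (Finset.mem_filter.mp hc).2
      have hc0K : (c0 * N + f) / d = K := (Finset.mem_filter.mp hc0).2
      have e1 : c * N + f = d * K + (c * N + f) % d := by
        conv_lhs => rw [← Nat.div_add_mod (c * N + f) d]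
        rw [hcK]
      have e2 : c0 * N + f = d * K + (c0 * N + f) % d := by
        conv_lhs => rw [← Nat.div_add_mod (c0 * N + f) d]
        rw [hc0K]
      have hr : (c * N + f) % d < d := Nat.mod_lt _ hd
      have h5 : c * N < c0 * N + d := by
        have hA : c * N + f < d * K + d := by omega
        have hB : d * K ≤ c0 * N + f := by omega
        omega
      have h6 : (c - c0) * N ≤ d - 1 := by
        have := Nat.sub_mul c c0 N
        omega
      have h7 : c - c0 ≤ (d - 1) / N := (Nat.le_div_iff_mul_le hN).mpr h6
      exact Finset.mem_Icc.mpr ⟨h1, by omega⟩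
    calc s.card ≤ (Finset.Icc c0 (c0 + (d - 1) / N)).card := Finset.card_le_card hsub
      _ = (d - 1) / N + 1 := by generalize (d-1)/N = m; rw [Nat.card_Icc]; omega

lemma fiber_bound (N d j : ℕ) (hN : 0 < N) (hd : 0 < d) :
    ((((Finset.Icc 1 (N ^ 2)) ×ˢ (Finset.Icc 1 (N ^ 2)) ×ˢ (Finset.Icc 1 (N ^ 2))).filter
      (fun t => Mu N (t.1, t.2.1) = Gamma d (t.2.2, t.2.1))).filter
      (fun t => t.2.1 = j)).card ≤ N * ((d - 1) / N + 1) := by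
  have key : ((((Finset.Icc 1 (N ^ 2)) ×ˢ (Finset.Icc 1 (N ^ 2)) ×ˢ (Finset.Icc 1 (N ^ 2))).filter
      (fun t => Mu N (t.1, t.2.1) = Gamma d (t.2.2, t.2.1))).filter
      (fun t => t.2.1 = j)).card ≤
      ((Finset.range N) ×ˢ ((Finset.range N).filter
        (fun c => (c * N + (j - 1) % N) / d = (j - 1) / d))).card := by
    apply Finset.card_le_card_of_injOn (fun t => ((t.1 - 1) / N, (t.1 - 1) % N))
    · intro t ht
      simp only [Finset.mem_coe, Finset.mem_filter, Finset.mem_product, Finset.mem_Icc] at ht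
      obtain ⟨⟨⟨⟨h11, h12⟩, ⟨h21, h22⟩, h31, h32⟩, heq⟩, hj⟩ := ht
      subst hj
      have heq2 := congrArg Prod.snd heq
      simp only [Mu, Gamma] at heq2
      have h1lt : (t.1 - 1) / N < N := by
        apply Nat.div_lt_of_lt_mul
        have : N * N = N ^ 2 := by ring
        omega
      simp only [Finset.mem_coe, Finset.mem_product, Finset.mem_range, Finset.mem_filter]
      refine ⟨h1lt, Nat.mod_lt _ hN, ?_⟩
      -- heq2 : (t.1-1)%N * N + (t.2.1-1)%N + 1 = (t.2.1-1)/d * d + (t.2.2-1)%d + 1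
      have hkey : (t.1 - 1) % N * N + (t.2.1 - 1) % N = (t.2.1 - 1) / d * d + (t.2.2 - 1) % d := by
        omega
      rw [hkey, mul_comm ((t.2.1 - 1) / d) d, Nat.mul_add_div hd,
        Nat.div_eq_of_lt (Nat.mod_lt _ hd), add_zero]
    · intro t ht t' ht' hF
      simp only [Finset.mem_coe, Finset.mem_filter, Finset.mem_product, Finset.mem_Icc] at ht ht'
      obtain ⟨⟨⟨⟨h11, h12⟩, ⟨h21, h22⟩, h31, h32⟩, heq⟩, hj⟩ := ht
      obtain ⟨⟨⟨⟨h11', h12'⟩, ⟨h21', h22'⟩, h31', h32'⟩, heq'⟩, hj'⟩ := ht'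
      have hFa : (t.1 - 1) / N = (t'.1 - 1) / N := congrArg Prod.fst hF
      have hFc : (t.1 - 1) % N = (t'.1 - 1) % N := congrArg Prod.snd hF
      have h1 : t.1 = t'.1 := by
        have e1 := Nat.div_add_mod (t.1 - 1) N
        have e2 := Nat.div_add_mod (t'.1 - 1) N
        rw [hFa, hFc] at e1
        omega
      have h2 : t.2.1 = t'.2.1 := by rw [hj, hj']
      have h3 : t.2.2 = t'.2.2 := by
        have hgg : Gamma d (t.2.2, t.2.1) = Gamma d (t'.2.2, t'.2.1) := by
          rw [← heq, ← heq', h1, h2]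
        rw [h2] at hgg
        simp only [Gamma, Prod.mk.injEq] at hgg
        obtain ⟨g1, g2⟩ := hgg
        have hq : (t.2.2 - 1) / d = (t'.2.2 - 1) / d := by
          have : (t.2.2 - 1) / d * d = (t'.2.2 - 1) / d * d := by omega
          exact Nat.eq_of_mul_eq_mul_right hd this
        have hm : (t.2.2 - 1) % d = (t'.2.2 - 1) % d := by omega
        have e1 := Nat.div_add_mod (t.2.2 - 1) d
        have e2 := Nat.div_add_mod (t'.2.2 - 1) d
        rw [hq, hm] at e1
        omega
      exact Prod.ext h1 (Prod.ext h2 h3)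
  calc _ ≤ _ := key
    _ ≤ N * ((d - 1) / N + 1) := by
        rw [Finset.card_product, Finset.card_range]
        exact Nat.mul_le_mul_left N (count_c N d ((j - 1) % N) ((j - 1) / d) hN hd)

lemma mixCount_le (N d : ℕ) (hN : 0 < N) (hd : 0 < d) :
    mixCount d N ≤ N ^ 2 * (N * ((d - 1) / N + 1)) := by
  unfold mixCount
  rw [Finset.card_eq_sum_card_fiberwise (f := fun t => t.2.1) (t := Finset.Icc 1 (N ^ 2))
    (fun x hx => by
      simp only [Finset.mem_coe, Finset.mem_filter, Finset.mem_product] at hx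
      exact hx.1.2.1)]
  calc _ ≤ ∑ _j ∈ Finset.Icc 1 (N ^ 2), N * ((d - 1) / N + 1) :=
        Finset.sum_le_sum (fun j _ => fiber_bound N d j hN hd)
    _ = N ^ 2 * (N * ((d - 1) / N + 1)) := by
        rw [Finset.sum_const, Nat.card_Icc, smul_eq_mul, Nat.add_sub_cancel]


/-- If `b_N·d_N = N²`, then `|{(i₁,i₂,i₃) ∈ [N²]³ : μ_N(i₁,i₂) = Γ_{b_N,d_N}(i₃,i₂)}|` is
at most `N³(1+N/d_N) + N³(1+N/b_N)`; in particular it is `o(N⁴)` along any sequence with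
`b_N → ∞` and `d_N → ∞`. -/
theorem stmt_15 (b d : ℕ → ℕ) (hbd : ∀ N, b N * d N = N ^ 2)
    (hbp : ∀ N, 0 < N → 0 < b N) (hdp : ∀ N, 0 < N → 0 < d N)
    (hb : Tendsto b atTop atTop) (hd : Tendsto d atTop atTop) :
    (∀ N, 0 < N →
      ((mixCount (d N) N : ℝ) ≤
        (N : ℝ) ^ 3 * (1 + (N : ℝ) / d N) + (N : ℝ) ^ 3 * (1 + (N : ℝ) / b N)))
    ∧ Tendsto (fun N => (mixCount (d N) N : ℝ) / (N : ℝ) ^ 4) atTop (nhds 0) := by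
  have main : ∀ N, 0 < N →
      ((mixCount (d N) N : ℝ) ≤
        (N : ℝ) ^ 3 * (1 + (N : ℝ) / d N) + (N : ℝ) ^ 3 * (1 + (N : ℝ) / b N)) := by
    intro N hN
    have hd0 := hdp N hN
    have hb0 := hbp N hN
    have hN' : (0 : ℝ) < (N : ℝ) := by exact_mod_cast hN
    have hd' : (0 : ℝ) < (d N : ℝ) := by exact_mod_cast hd0
    have hb' : (0 : ℝ) < (b N : ℝ) := by exact_mod_cast hb0
    have hnat := mixCount_le N (d N) hN hd0
    have h1 : (mixCount (d N) N : ℝ) ≤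
        (N : ℝ) ^ 2 * ((N : ℝ) * ((((d N - 1) / N : ℕ) : ℝ) + 1)) := by
      calc (mixCount (d N) N : ℝ) ≤ ((N ^ 2 * (N * ((d N - 1) / N + 1)) : ℕ) : ℝ) := by
            exact_mod_cast hnat
        _ = (N : ℝ) ^ 2 * ((N : ℝ) * ((((d N - 1) / N : ℕ) : ℝ) + 1)) := by push_cast; ring
    have h2 : ((((d N - 1) / N : ℕ)) : ℝ) ≤ (d N : ℝ) / N := by
      calc ((((d N - 1) / N : ℕ)) : ℝ) ≤ ((d N - 1 : ℕ) : ℝ) / (N : ℝ) := Nat.cast_div_le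
        _ ≤ (d N : ℝ) / N := by
            gcongr
            exact_mod_cast Nat.sub_le (d N) 1
    have h3 : (mixCount (d N) N : ℝ) ≤ (N : ℝ) ^ 3 * (1 + (N : ℝ) / b N) := by
      have hdb : (d N : ℝ) / N = (N : ℝ) / b N := by
        rw [div_eq_div_iff hN'.ne' hb'.ne']
        have := hbd N
        have : ((b N : ℝ) * (d N : ℝ)) = (N : ℝ) ^ 2 := by exact_mod_cast this
        nlinarith [this]
      calc (mixCount (d N) N : ℝ) ≤ (N : ℝ) ^ 2 * ((N : ℝ) * ((d N : ℝ) / N + 1)) := by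
            refine h1.trans ?_
            have : ((((d N - 1) / N : ℕ)) : ℝ) + 1 ≤ (d N : ℝ) / N + 1 := by linarith
            nlinarith [this, hN'.le, sq_nonneg (N:ℝ)]
        _ = (N : ℝ) ^ 3 * (1 + (d N : ℝ) / N) := by ring
        _ = (N : ℝ) ^ 3 * (1 + (N : ℝ) / b N) := by rw [hdb]
    have hpos : (0 : ℝ) ≤ (N : ℝ) ^ 3 * (1 + (N : ℝ) / d N) := by positivity
    linarith
  refine ⟨main, ?_⟩
  apply squeeze_zero' (g := fun N : ℕ => 2 / (N : ℝ) + 1 / (d N : ℝ) + 1 / (b N : ℝ))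
  · filter_upwards [eventually_ge_atTop 1] with N hN
    positivity
  · filter_upwards [eventually_ge_atTop 1] with N hN
    have hN0 : 0 < N := hN
    have hd0 := hdp N hN0
    have hb0 := hbp N hN0
    have hN' : (0 : ℝ) < (N : ℝ) := by exact_mod_cast hN0
    have hd' : (0 : ℝ) < (d N : ℝ) := by exact_mod_cast hd0
    have hb' : (0 : ℝ) < (b N : ℝ) := by exact_mod_cast hb0
    have := main N hN0
    rw [div_le_iff₀ (by positivity)]
    have heq : (2 / (N : ℝ) + 1 / (d N : ℝ) + 1 / (b N : ℝ)) * (N : ℝ) ^ 4 =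
        (N : ℝ) ^ 3 * (1 + (N : ℝ) / d N) + (N : ℝ) ^ 3 * (1 + (N : ℝ) / b N) := by
      field_simp
      ring
    rw [heq]
    exact this
  · have t1 : Tendsto (fun N : ℕ => 2 / (N : ℝ)) atTop (nhds 0) := by
      have := tendsto_one_div_atTop_nhds_zero_nat (𝕜 := ℝ)
      have h := this.const_mul (2 : ℝ)
      simpa [div_eq_mul_inv] using h
    have t2 : Tendsto (fun N : ℕ => 1 / (d N : ℝ)) atTop (nhds 0) := by
      have : Tendsto (fun N => ((d N : ℝ))) atTop atTop :=
        tendsto_natCast_atTop_atTop.comp hd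
      simpa [one_div, Function.comp_def] using tendsto_inv_atTop_zero.comp this
    have t3 : Tendsto (fun N : ℕ => 1 / (b N : ℝ)) atTop (nhds 0) := by
      have : Tendsto (fun N => ((b N : ℝ))) atTop atTop :=
        tendsto_natCast_atTop_atTop.comp hb
      simpa [one_div, Function.comp_def] using tendsto_inv_atTop_zero.comp this
    simpa using (t1.add t2).add t3
end

section
/- The map ϑ : [N]^m → ([N]²)^m = [N]^{2m}, sending (i₁,…,i_m) to the tuple ((k₁,l₁),…,(k_m,l_m)) defined via the permutations σ_t and signs θ_t as in the construction, is injective. -/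
/-- The index `t ∈ [r]` of the block `S_t = {m(t-1)+1,…,m(t)}` containing `s`. -/
noncomputable def blk (n : ℕ → ℕ) (r s : ℕ) : ℕ :=
  (((Finset.Icc 1 r).filter (fun t => mfun n (t - 1) < s ∧ s ≤ mfun n t)).min).untopD 0

/-- The map `ϑ` of the paper: given a tuple `i : [m] → [N]` (with `i_{m+1} := i₁`), it
produces the pair `(k_s, l_s)` for each `s ∈ [m]`, following the case distinction on
whether `s` is the first index, the last index, or an interior index of its block `S_t`
(the Boolean `θ t = true` encoding `θ_t = 1` and `θ t = false` encoding `θ_t = *`);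
for singleton blocks the first- and last-index rules combine to `σ_t(i_s, i_{s+1})`. -/
noncomputable def klMap (r : ℕ) (n : ℕ → ℕ) (σ : ℕ → ℕ × ℕ → ℕ × ℕ) (θ : ℕ → Bool)
    (i : ℕ → ℕ) (s : ℕ) : ℕ × ℕ :=
  let m := mfun n r
  let iv : ℕ → ℕ := fun u => if u = m + 1 then i 1 else i u
  let t := blk n r s
  let a := iv (mfun n (t - 1) + 1)
  let b := iv (mfun n t + 1)
  if mfun n (t - 1) + 1 = mfun n t then σ t (a, b)
  else if s = mfun n (t - 1) + 1 then
    (if θ t then ((σ t (a, b)).1, iv (s + 1)) else (iv (s + 1), (σ t (a, b)).2))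
  else if s = mfun n t then
    (if θ t then (iv s, (σ t (a, b)).2) else ((σ t (a, b)).1, iv s))
  else (if θ t then (iv s, iv (s + 1)) else (iv (s + 1), iv s))

def ivf (n : ℕ → ℕ) (r : ℕ) (i : ℕ → ℕ) (u : ℕ) : ℕ :=
  if u = mfun n r + 1 then i 1 else i u

lemma ivf_eq (n : ℕ → ℕ) (r : ℕ) (i : ℕ → ℕ) (u : ℕ) (hu : u ≤ mfun n r) :
    ivf n r i u = i u := if_neg (by omega)

lemma mfun_mono (n : ℕ → ℕ) : Monotone (mfun n) := fun a b hab =>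
  Finset.sum_le_sum_of_subset (Finset.Icc_subset_Icc_right hab)

lemma blk_eq (n : ℕ → ℕ) (r s t : ℕ) (ht1 : 1 ≤ t) (ht2 : t ≤ r)
    (h1 : mfun n (t - 1) < s) (h2 : s ≤ mfun n t) : blk n r s = t := by
  have hmem : t ∈ (Finset.Icc 1 r).filter (fun u => mfun n (u - 1) < s ∧ s ≤ mfun n u) := by
    simp only [Finset.mem_filter, Finset.mem_Icc]
    exact ⟨⟨ht1, ht2⟩, h1, h2⟩
  have hmin : ((Finset.Icc 1 r).filter (fun u => mfun n (u - 1) < s ∧ s ≤ mfun n u)).min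
      = (t : WithTop ℕ) := by
    apply le_antisymm (Finset.min_le hmem)
    apply Finset.le_min
    intro b hb
    simp only [Finset.mem_filter, Finset.mem_Icc] at hb
    obtain ⟨⟨hb1, hb2⟩, hb3, hb4⟩ := hb
    have htb : t ≤ b := by
      by_contra hc
      push_neg at hc
      have hle : mfun n b ≤ mfun n (t - 1) := mfun_mono n (by omega)
      omega
    exact_mod_cast htb
  unfold blk
  rw [hmin]
  rfl

lemma klMap_sing (r : ℕ) (n : ℕ → ℕ) (σ : ℕ → ℕ × ℕ → ℕ × ℕ) (θ : ℕ → Bool)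
    (i : ℕ → ℕ) (s t : ℕ) (hbt : blk n r s = t) (hc1 : mfun n (t - 1) + 1 = mfun n t) :
    klMap r n σ θ i s = σ t (ivf n r i (mfun n (t - 1) + 1), ivf n r i (mfun n t + 1)) := by
  simp only [klMap, hbt, ivf]
  rw [if_pos hc1]

lemma klMap_first (r : ℕ) (n : ℕ → ℕ) (σ : ℕ → ℕ × ℕ → ℕ × ℕ) (θ : ℕ → Bool)
    (i : ℕ → ℕ) (s t : ℕ) (hbt : blk n r s = t) (hc1 : mfun n (t - 1) + 1 ≠ mfun n t)
    (hc2 : s = mfun n (t - 1) + 1) :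
    klMap r n σ θ i s =
      if θ t then
        ((σ t (ivf n r i (mfun n (t - 1) + 1), ivf n r i (mfun n t + 1))).1, ivf n r i (s + 1))
      else
        (ivf n r i (s + 1), (σ t (ivf n r i (mfun n (t - 1) + 1), ivf n r i (mfun n t + 1))).2) := by
  simp only [klMap, hbt, ivf]
  rw [if_neg hc1, if_pos hc2]

lemma klMap_last (r : ℕ) (n : ℕ → ℕ) (σ : ℕ → ℕ × ℕ → ℕ × ℕ) (θ : ℕ → Bool)
    (i : ℕ → ℕ) (s t : ℕ) (hbt : blk n r s = t) (hc1 : mfun n (t - 1) + 1 ≠ mfun n t)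
    (hc2 : s ≠ mfun n (t - 1) + 1) (hc3 : s = mfun n t) :
    klMap r n σ θ i s =
      if θ t then
        (ivf n r i s, (σ t (ivf n r i (mfun n (t - 1) + 1), ivf n r i (mfun n t + 1))).2)
      else
        ((σ t (ivf n r i (mfun n (t - 1) + 1), ivf n r i (mfun n t + 1))).1, ivf n r i s) := by
  simp only [klMap, hbt, ivf]
  rw [if_neg hc1, if_neg hc2, if_pos hc3]

lemma klMap_mid (r : ℕ) (n : ℕ → ℕ) (σ : ℕ → ℕ × ℕ → ℕ × ℕ) (θ : ℕ → Bool)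
    (i : ℕ → ℕ) (s t : ℕ) (hbt : blk n r s = t) (hc1 : mfun n (t - 1) + 1 ≠ mfun n t)
    (hc2 : s ≠ mfun n (t - 1) + 1) (hc3 : s ≠ mfun n t) :
    klMap r n σ θ i s =
      if θ t then (ivf n r i s, ivf n r i (s + 1))
      else (ivf n r i (s + 1), ivf n r i s) := by
  simp only [klMap, hbt, ivf]
  rw [if_neg hc1, if_neg hc2, if_neg hc3]

/-- The map `ϑ : [N]^m → [N]^{2m}`, `(i₁,…,i_m) ↦ ((k₁,l₁),…,(k_m,l_m))`, is injective
(where the `σ_t` are permutations of `[N]²` and `n_t ≥ 1` for `t ∈ [r]`). -/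
theorem stmt_16 (N r : ℕ) (hN : 0 < N) (hr : 0 < r) (n : ℕ → ℕ)
    (hn : ∀ t ∈ Finset.Icc 1 r, 0 < n t)
    (σ : ℕ → ℕ × ℕ → ℕ × ℕ)
    (hσ : ∀ t ∈ Finset.Icc 1 r,
      Set.BijOn (σ t) ((Set.Icc 1 N) ×ˢ (Set.Icc 1 N)) ((Set.Icc 1 N) ×ˢ (Set.Icc 1 N)))
    (θ : ℕ → Bool) (i i' : ℕ → ℕ)
    (hi : ∀ s ∈ Finset.Icc 1 (mfun n r), i s ∈ Set.Icc 1 N)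
    (hi' : ∀ s ∈ Finset.Icc 1 (mfun n r), i' s ∈ Set.Icc 1 N)
    (h : ∀ s ∈ Finset.Icc 1 (mfun n r), klMap r n σ θ i s = klMap r n σ θ i' s) :
    ∀ s ∈ Finset.Icc 1 (mfun n r), i s = i' s := by
  intro s hs
  rw [Finset.mem_Icc] at hs
  obtain ⟨hs1, hs2⟩ := hs
  have hm1 : 1 ≤ mfun n r :=
    le_trans (hn r (Finset.mem_Icc.mpr ⟨hr, le_refl r⟩))
      (Finset.single_le_sum (f := n) (fun u _ => Nat.zero_le _)
        (Finset.mem_Icc.mpr ⟨hr, le_refl r⟩))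
  -- find the block t containing s
  have hex : ∃ t, (1 ≤ t ∧ t ≤ r) ∧ s ≤ mfun n t ∧ mfun n (t - 1) < s := by
    set T := (Finset.Icc 1 r).filter (fun u => s ≤ mfun n u) with hT
    have hTne : T.Nonempty := ⟨r, by
      simp only [hT, Finset.mem_filter, Finset.mem_Icc]
      exact ⟨⟨hr, le_refl r⟩, hs2⟩⟩
    have hmm := T.min'_mem hTne
    simp only [hT, Finset.mem_filter, Finset.mem_Icc] at hmm
    refine ⟨T.min' hTne, hmm.1, hmm.2, ?_⟩
    rcases Nat.lt_or_ge (T.min' hTne - 1) 1 with h1 | h1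
    · have ht0 : T.min' hTne - 1 = 0 := by omega
      have hz : mfun n 0 = 0 := by simp [mfun]
      rw [ht0, hz]; omega
    · by_contra hc
      push_neg at hc
      have hmem : T.min' hTne - 1 ∈ T := by
        simp only [hT, Finset.mem_filter, Finset.mem_Icc]
        exact ⟨⟨h1, by omega⟩, hc⟩
      have := T.min'_le _ hmem
      omega
  obtain ⟨t, ⟨ht1, ht2⟩, hts2, hts1⟩ := hex
  have hbt : blk n r s = t := blk_eq n r s t ht1 ht2 hts1 hts2
  have hmt_le : mfun n t ≤ mfun n r := mfun_mono n ht2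
  have hbmem : ivf n r i (mfun n t + 1) ∈ Set.Icc 1 N := by
    unfold ivf
    split_ifs with hC
    · exact hi 1 (Finset.mem_Icc.mpr ⟨le_refl 1, hm1⟩)
    · exact hi _ (Finset.mem_Icc.mpr ⟨by omega, by omega⟩)
  have hbmem' : ivf n r i' (mfun n t + 1) ∈ Set.Icc 1 N := by
    unfold ivf
    split_ifs with hC
    · exact hi' 1 (Finset.mem_Icc.mpr ⟨le_refl 1, hm1⟩)
    · exact hi' _ (Finset.mem_Icc.mpr ⟨by omega, by omega⟩)
  have hamem : i s ∈ Set.Icc 1 N := hi s (Finset.mem_Icc.mpr ⟨hs1, hs2⟩)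
  have hamem' : i' s ∈ Set.Icc 1 N := hi' s (Finset.mem_Icc.mpr ⟨hs1, hs2⟩)
  have hσt := (hσ t (Finset.mem_Icc.mpr ⟨ht1, ht2⟩)).injOn
  by_cases hc2 : s = mfun n (t - 1) + 1
  · -- s is the first index of its block
    have hσeq : σ t (i s, ivf n r i (mfun n t + 1)) = σ t (i' s, ivf n r i' (mfun n t + 1)) := by
      by_cases hc1 : mfun n (t - 1) + 1 = mfun n t
      · have hh := h s (Finset.mem_Icc.mpr ⟨hs1, hs2⟩)
        rw [klMap_sing r n σ θ i s t hbt hc1, klMap_sing r n σ θ i' s t hbt hc1,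
          ← hc2, ivf_eq n r i s hs2, ivf_eq n r i' s hs2] at hh
        exact hh
      · have hfl : mfun n (t - 1) + 1 < mfun n t := by omega
        have hbt2 : blk n r (mfun n t) = t :=
          blk_eq n r (mfun n t) t ht1 ht2 (by omega) (le_refl _)
        have hh1 := h s (Finset.mem_Icc.mpr ⟨hs1, hs2⟩)
        have hh2 := h (mfun n t) (Finset.mem_Icc.mpr ⟨by omega, hmt_le⟩)
        rw [klMap_first r n σ θ i s t hbt hc1 hc2,
            klMap_first r n σ θ i' s t hbt hc1 hc2,
            ← hc2, ivf_eq n r i s hs2, ivf_eq n r i' s hs2] at hh1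
        rw [klMap_last r n σ θ i (mfun n t) t hbt2 hc1 (by omega) rfl,
            klMap_last r n σ θ i' (mfun n t) t hbt2 hc1 (by omega) rfl,
            ← hc2, ivf_eq n r i s hs2, ivf_eq n r i' s hs2] at hh2
        cases hθ : θ t with
        | true =>
          rw [if_pos hθ, if_pos hθ] at hh1 hh2
          have p1 := congrArg Prod.fst hh1
          have p2 := congrArg Prod.snd hh2
          simp only at p1 p2
          exact Prod.ext_iff.mpr ⟨p1, p2⟩
        | false =>
          have hθ' : ¬ θ t = true := by simp [hθ]
          rw [if_neg hθ', if_neg hθ'] at hh1 hh2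
          have p1 := congrArg Prod.fst hh2
          have p2 := congrArg Prod.snd hh1
          simp only at p1 p2
          exact Prod.ext_iff.mpr ⟨p1, p2⟩
    have := hσt (Set.mem_prod.mpr ⟨hamem, hbmem⟩) (Set.mem_prod.mpr ⟨hamem', hbmem'⟩) hσeq
    exact congrArg Prod.fst this
  · -- s is not the first index: read i s off directly
    have hc1 : mfun n (t - 1) + 1 ≠ mfun n t := by omega
    have hh := h s (Finset.mem_Icc.mpr ⟨hs1, hs2⟩)
    by_cases hc3 : s = mfun n t
    · rw [klMap_last r n σ θ i s t hbt hc1 hc2 hc3,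
          klMap_last r n σ θ i' s t hbt hc1 hc2 hc3,
          ivf_eq n r i s hs2, ivf_eq n r i' s hs2] at hh
      cases hθ : θ t with
      | true =>
        rw [if_pos hθ, if_pos hθ] at hh
        exact congrArg Prod.fst hh
      | false =>
        have hθ' : ¬ θ t = true := by simp [hθ]
        rw [if_neg hθ', if_neg hθ'] at hh
        exact congrArg Prod.snd hh
    · rw [klMap_mid r n σ θ i s t hbt hc1 hc2 hc3,
          klMap_mid r n σ θ i' s t hbt hc1 hc2 hc3,
          ivf_eq n r i s hs2, ivf_eq n r i' s hs2] at hh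
      cases hθ : θ t with
      | true =>
        rw [if_pos hθ, if_pos hθ] at hh
        exact congrArg Prod.fst hh
      | false =>
        have hθ' : ¬ θ t = true := by simp [hθ]
        rw [if_neg hθ', if_neg hθ'] at hh
        exact congrArg Prod.snd hh
end
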